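/- arXiv:0906.3667 — 4 statements merged into one kernel-verified Lean document; each statement's English description precedes it below -/
import Mathlib

section
/- Let A = (a_{ij}) and B = (b_{ij}) be N×N matrices with nonnegative entries. Then the spectral radius of the entrywise matrix (a_{ij}^{1/2} b_{ij}^{1/2}) is at most ρ(A)^{1/2} ρ(B)^{1/2}. -/
open Matrix

/-- The spectral radius of a square complex matrix: the largest absolute value of its
eigenvalues (roots of the characteristic polynomial). -/
noncomputable def specRad {N : ℕ} (M : Matrix (Fin N) (Fin N) ℂ) : ℝ :=
  sSup {r : ℝ | ∃ μ : ℂ, M.charpoly.IsRoot μ ∧ r = ‖μ‖}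

/-!
By Cauchy–Schwarz, the entries of the powers of `C = (√aᵢⱼ √bᵢⱼ)` satisfy
`(Cᵏ)ᵢⱼ ≤ √(Aᵏ)ᵢⱼ √(Bᵏ)ᵢⱼ`, and a second application to the row sums gives
`‖Cᵏ‖ ≤ √‖Aᵏ‖ √‖Bᵏ‖` in the `ℓ∞`-operator norm. Taking `k`-th roots and letting `k → ∞`,
Gelfand's formula turns this into `ρ(C) ≤ √ρ(A) √ρ(B)`.
-/

open Filter Topology

namespace spectrum

variable {A : Type*} [NormedRing A] [NormedAlgebra ℂ A] [CompleteSpace A]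

theorem spectralRadius_ne_top (a : A) : spectralRadius ℂ a ≠ ⊤ :=
  ((spectralRadius_le_pow_nnnorm_pow_one_div ℂ a 0).trans_lt (by simp [ENNReal.mul_lt_top])).ne

theorem tendsto_norm_pow_rpow_toReal_spectralRadius (a : A) :
    Tendsto (fun n : ℕ => ‖a ^ n‖ ^ (1 / n : ℝ)) atTop (𝓝 (spectralRadius ℂ a).toReal) := by
  refine ((ENNReal.tendsto_toReal (spectralRadius_ne_top a)).comp
    (pow_norm_pow_one_div_tendsto_nhds_spectralRadius a)).congr fun n => ?_
  simp [ENNReal.toReal_ofReal, Real.rpow_nonneg (norm_nonneg _)]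

theorem toReal_spectralRadius_le_sqrt_mul_sqrt {a b c : A}
    (h : ∀ n : ℕ, ‖c ^ n‖ ≤ √‖a ^ n‖ * √‖b ^ n‖) :
    (spectralRadius ℂ c).toReal ≤
      √(spectralRadius ℂ a).toReal * √(spectralRadius ℂ b).toReal := by
  refine le_of_tendsto_of_tendsto' (tendsto_norm_pow_rpow_toReal_spectralRadius c)
    ((tendsto_norm_pow_rpow_toReal_spectralRadius a).sqrt.mul
      (tendsto_norm_pow_rpow_toReal_spectralRadius b).sqrt) fun n => ?_
  have sqrt_rpow_comm (x : ℝ) (hx : 0 ≤ x) : √x ^ (1 / n : ℝ) = √(x ^ (1 / n : ℝ)) := by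
    rw [Real.sqrt_eq_rpow, Real.sqrt_eq_rpow, ← Real.rpow_mul hx, ← Real.rpow_mul hx, mul_comm]
  calc ‖c ^ n‖ ^ (1 / n : ℝ) ≤ (√‖a ^ n‖ * √‖b ^ n‖) ^ (1 / n : ℝ) := by gcongr; exact h n
    _ = √(‖a ^ n‖ ^ (1 / n : ℝ)) * √(‖b ^ n‖ ^ (1 / n : ℝ)) := by
      rw [Real.mul_rpow (Real.sqrt_nonneg _) (Real.sqrt_nonneg _),
        sqrt_rpow_comm _ (norm_nonneg _), sqrt_rpow_comm _ (norm_nonneg _)]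

end spectrum

namespace Matrix

variable {l m n : Type*}

theorem mul_apply_le_sqrt_mul_sqrt [Fintype m] {A₁ B₁ C₁ : Matrix l m ℝ}
    {A₂ B₂ C₂ : Matrix m n ℝ} (hA₁ : ∀ i j, 0 ≤ A₁ i j) (hB₁ : ∀ i j, 0 ≤ B₁ i j)
    (hA₂ : ∀ i j, 0 ≤ A₂ i j) (hB₂ : ∀ i j, 0 ≤ B₂ i j) (hC₂ : ∀ i j, 0 ≤ C₂ i j)
    (h₁ : ∀ i j, C₁ i j ≤ √(A₁ i j) * √(B₁ i j)) (h₂ : ∀ i j, C₂ i j ≤ √(A₂ i j) * √(B₂ i j))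
    (i : l) (j : n) : (C₁ * C₂) i j ≤ √((A₁ * A₂) i j) * √((B₁ * B₂) i j) := by
  simp only [mul_apply]
  calc ∑ k, C₁ i k * C₂ k j ≤ ∑ k, √(A₁ i k * A₂ k j) * √(B₁ i k * B₂ k j) := by
        refine Finset.sum_le_sum fun k _ => ?_
        calc C₁ i k * C₂ k j ≤ (√(A₁ i k) * √(B₁ i k)) * (√(A₂ k j) * √(B₂ k j)) :=
              mul_le_mul (h₁ i k) (h₂ k j) (hC₂ k j) (by positivity)
          _ = √(A₁ i k * A₂ k j) * √(B₁ i k * B₂ k j) := by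
              rw [Real.sqrt_mul (hA₁ i k), Real.sqrt_mul (hB₁ i k)]; ring
    _ ≤ √(∑ k, A₁ i k * A₂ k j) * √(∑ k, B₁ i k * B₂ k j) :=
        Real.sum_sqrt_mul_sqrt_le _ (fun k => mul_nonneg (hA₁ i k) (hA₂ k j))
          (fun k => mul_nonneg (hB₁ i k) (hB₂ k j))

theorem pow_apply_le_sqrt_mul_sqrt [Fintype n] [DecidableEq n] {A B C : Matrix n n ℝ}
    (hA : ∀ i j, 0 ≤ A i j) (hB : ∀ i j, 0 ≤ B i j) (hC₀ : ∀ i j, 0 ≤ C i j)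
    (hC : ∀ i j, C i j ≤ √(A i j) * √(B i j)) (k : ℕ) :
    ∀ i j, (C ^ k) i j ≤ √((A ^ k) i j) * √((B ^ k) i j) := by
  induction k with
  | zero => intro i j; rcases eq_or_ne i j with rfl | hij <;> simp [*]
  | succ k ih =>
    simp only [pow_succ]
    exact mul_apply_le_sqrt_mul_sqrt (pow_apply_nonneg hA k) (pow_apply_nonneg hB k) hA hB hC₀
      ih hC

section LinftyOpNorm

attribute [local instance] Matrix.linftyOpNormedAddCommGroup Matrix.linftyOpNormedRing
  Matrix.linftyOpNormedAlgebra

variable [Fintype m] [Fintype n] {α β γ : Type*} [NormedAddCommGroup α] [NormedAddCommGroup β]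
  [NormedAddCommGroup γ]

theorem sum_norm_apply_le_linfty_opNorm (A : Matrix m n α) (i : m) : ∑ j, ‖A i j‖ ≤ ‖A‖ := by
  rw [linfty_opNorm_def]
  have := Finset.le_sup (f := fun i => ∑ j, ‖A i j‖₊) (Finset.mem_univ i)
  simpa only [← NNReal.coe_le_coe, NNReal.coe_sum, coe_nnnorm] using this

theorem linfty_opNorm_le_of_sum_norm_apply_le {A : Matrix m n α} {c : ℝ} (hc : 0 ≤ c)
    (h : ∀ i, ∑ j, ‖A i j‖ ≤ c) : ‖A‖ ≤ c := by
  lift c to NNReal using hc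
  rw [linfty_opNorm_def, NNReal.coe_le_coe]
  refine Finset.sup_le fun i _ => ?_
  simpa only [← NNReal.coe_le_coe, NNReal.coe_sum, coe_nnnorm] using h i

theorem linfty_opNorm_le_sqrt_mul_sqrt {R : Matrix m n α} {P : Matrix m n β}
    {Q : Matrix m n γ} (h : ∀ i j, ‖R i j‖ ≤ √‖P i j‖ * √‖Q i j‖) :
    ‖R‖ ≤ √‖P‖ * √‖Q‖ := by
  refine linfty_opNorm_le_of_sum_norm_apply_le (by positivity) fun i => ?_
  calc ∑ j, ‖R i j‖ ≤ ∑ j, √‖P i j‖ * √‖Q i j‖ := Finset.sum_le_sum fun j _ => h i j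
    _ ≤ √(∑ j, ‖P i j‖) * √(∑ j, ‖Q i j‖) :=
        Real.sum_sqrt_mul_sqrt_le _ (fun _ => norm_nonneg _) (fun _ => norm_nonneg _)
    _ ≤ √‖P‖ * √‖Q‖ := by
        gcongr <;> exact sum_norm_apply_le_linfty_opNorm _ i

theorem toReal_spectralRadius_sqrt_mul_sqrt_le [DecidableEq n] {A B : Matrix n n ℝ}
    (hA : ∀ i j, 0 ≤ A i j) (hB : ∀ i j, 0 ≤ B i j) :
    (spectralRadius ℂ ((of fun i j => √(A i j) * √(B i j)).map Complex.ofReal)).toReal ≤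
      √(spectralRadius ℂ (A.map Complex.ofReal)).toReal *
        √(spectralRadius ℂ (B.map Complex.ofReal)).toReal := by
  have map_ofReal_pow (M : Matrix n n ℝ) (k : ℕ) :
      M.map Complex.ofReal ^ k = (M ^ k).map Complex.ofReal :=
    (map_pow Complex.ofRealHom.mapMatrix M k).symm
  have norm_ofReal {x : ℝ} (hx : 0 ≤ x) : ‖(x : ℂ)‖ = x := by
    rw [Complex.norm_real, Real.norm_of_nonneg hx]
  refine spectrum.toReal_spectralRadius_le_sqrt_mul_sqrt fun k => ?_
  simp only [map_ofReal_pow]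
  refine linfty_opNorm_le_sqrt_mul_sqrt fun i j => ?_
  have hC₀ : ∀ i j, 0 ≤ (of fun i j => √(A i j) * √(B i j)) i j :=
    fun _ _ => mul_nonneg (Real.sqrt_nonneg _) (Real.sqrt_nonneg _)
  simp only [map_apply, norm_ofReal (pow_apply_nonneg hC₀ k i j),
    norm_ofReal (pow_apply_nonneg hA k i j), norm_ofReal (pow_apply_nonneg hB k i j)]
  exact pow_apply_le_sqrt_mul_sqrt hA hB hC₀ (fun _ _ => le_rfl) k i j

end LinftyOpNorm

end Matrix

theorem specRad_eq_toReal_spectralRadius {N : ℕ} (M : Matrix (Fin N) (Fin N) ℂ) :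
    specRad M = (spectralRadius ℂ M).toReal := by
  have hset : {r : ℝ | ∃ μ : ℂ, M.charpoly.IsRoot μ ∧ r = ‖μ‖} = (‖·‖) '' spectrum ℂ M := by
    ext r
    simp [Matrix.mem_spectrum_iff_isRoot_charpoly, eq_comm]
  have hbdd : BddAbove ((‖·‖) '' spectrum ℂ M) := (M.finite_spectrum.image _).bddAbove
  have hnonneg : 0 ≤ specRad M := by
    rw [specRad, hset]
    exact Real.sSup_nonneg (by rintro _ ⟨μ, -, rfl⟩; exact norm_nonneg μ)
  have hle : spectralRadius ℂ M ≤ ENNReal.ofReal (specRad M) := by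
    refine iSup₂_le fun μ hμ => ?_
    rw [← ENNReal.ofReal_coe_nnreal, coe_nnnorm, specRad, hset]
    exact ENNReal.ofReal_le_ofReal (le_csSup hbdd ⟨μ, hμ, rfl⟩)
  have hne_top : spectralRadius ℂ M ≠ ⊤ := ne_top_of_le_ne_top ENNReal.ofReal_ne_top hle
  refine le_antisymm ?_ (ENNReal.toReal_le_of_le_ofReal hnonneg hle)
  rw [specRad, hset]
  refine Real.sSup_le ?_ ENNReal.toReal_nonneg
  rintro _ ⟨μ, hμ, rfl⟩
  change ‖μ‖ ≤ _
  rw [← coe_nnnorm, ← ENNReal.coe_toReal]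
  exact ENNReal.toReal_mono hne_top (le_iSup₂ (f := fun k (_ : k ∈ spectrum ℂ M) =>
    (‖k‖₊ : ENNReal)) μ hμ)

theorem specRad_entrywise_sqrt_le {N : ℕ} (A B : Matrix (Fin N) (Fin N) ℝ)
    (hA : ∀ i j, 0 ≤ A i j) (hB : ∀ i j, 0 ≤ B i j) :
    specRad ((Matrix.of fun i j => Real.sqrt (A i j) * Real.sqrt (B i j)).map Complex.ofReal)
      ≤ Real.sqrt (specRad (A.map Complex.ofReal)) *
        Real.sqrt (specRad (B.map Complex.ofReal)) := by
  simpa only [specRad_eq_toReal_spectralRadius] using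
    Matrix.toReal_spectralRadius_sqrt_mul_sqrt_le hA hB
end

section
/- Let A (m×n) and B (n×p) be complex matrices, and let s_i^M denote the i-th largest singular value of M (0 when i > rank(M)). Then for all nonnegative integers m, n: s_{m+n+1}^{AB} ≤ s_{m+1}^A · s_{n+1}^B. -/
open Matrix
open scoped ComplexOrder

/-- The `i`-th largest singular value (1-indexed) of a rectangular complex matrix,
defined to be `0` when `i` is out of range (in particular when `i > rank M`). -/
noncomputable def sv {p q : ℕ} (M : Matrix (Fin p) (Fin q) ℂ) (i : ℕ) : ℝ :=
  if h : 1 ≤ i ∧ i ≤ q then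
    Real.sqrt ((Matrix.posSemidef_conjTranspose_mul_self M).1.eigenvalues
      (Tuple.sort ((Matrix.posSemidef_conjTranspose_mul_self M).1.eigenvalues)
        ⟨q - i, by omega⟩))
  else 0

/-!
Write `k = m + n + 1`. The eigenvectors of `(AB)ᴴ(AB)` for its `k` largest eigenvalues span a
`k`-dimensional subspace `U` on which `‖ABx‖ ≥ s_k(AB) ‖x‖`. The eigenvectors of `BᴴB` for all but
its `n` largest eigenvalues span a subspace `W` of codimension at most `n` on which
`‖Bx‖ ≤ s_{n+1}(B) ‖x‖`; likewise for `A` one gets `V` of codimension at most `m`, and its preimage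
under `B` still has codimension at most `m`. Since `k + (r - n) + (r - m) > 2r`, the subspaces
`U`, `W` and `B⁻¹ V` share a nonzero vector `x`, for which
`s_k(AB) ‖x‖ ≤ ‖ABx‖ ≤ s_{m+1}(A) ‖Bx‖ ≤ s_{m+1}(A) s_{n+1}(B) ‖x‖`.
-/

open Module Submodule Finset

section FiniteDimensional

variable {K V : Type*} [DivisionRing K] [AddCommGroup V] [Module K V] [FiniteDimensional K V]

theorem Submodule.finrank_add_finrank_le_finrank_inf_add (s t : Submodule K V) :
    finrank K s + finrank K t ≤ finrank K ↥(s ⊓ t) + finrank K V := by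
  have := (s ⊔ t).finrank_le
  have := finrank_sup_add_finrank_inf_eq s t
  omega

theorem Submodule.exists_mem_inf_ne_zero_of_finrank_lt {s t : Submodule K V}
    (h : finrank K V < finrank K s + finrank K t) : ∃ x ∈ s ⊓ t, x ≠ 0 := by
  refine exists_mem_ne_zero_of_ne_bot fun hst => ?_
  have := finrank_add_finrank_le_of_disjoint (disjoint_iff.mpr hst)
  omega

theorem Submodule.finrank_add_finrank_le_finrank_comap_add {W : Type*} [AddCommGroup W]
    [Module K W] [FiniteDimensional K W] (f : V →ₗ[K] W) (p : Submodule K W) :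
    finrank K V + finrank K p ≤ finrank K (p.comap f) + finrank K W := by
  have hrank := LinearMap.finrank_range_add_finrank_ker (p.mkQ ∘ₗ f)
  rw [LinearMap.ker_comp, ker_mkQ] at hrank
  have := (LinearMap.range (p.mkQ ∘ₗ f)).finrank_le
  have := p.finrank_quotient_add_finrank
  omega

end FiniteDimensional

theorem LinearIndependent.finrank_span_image_finset {R M ι : Type*} [Ring R] [Nontrivial R]
    [StrongRankCondition R] [AddCommGroup M] [Module R M] {v : ι → M} (hv : LinearIndependent R v)
    (s : Finset ι) : finrank R (span R (v '' s)) = #s := by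
  have := finrank_span_eq_card (hv.comp _ (Subtype.val_injective (p := (· ∈ s))))
  rwa [Fintype.card_coe, Set.range_comp, Subtype.range_coe_subtype] at this

theorem OrthonormalBasis.repr_eq_zero_of_mem_span_image {𝕜 E ι : Type*} [RCLike 𝕜] [Fintype ι]
    [NormedAddCommGroup E] [InnerProductSpace 𝕜 E] (b : OrthonormalBasis ι 𝕜 E) {s : Set ι}
    {x : E} (hx : x ∈ span 𝕜 (b '' s)) {j : ι} (hj : j ∉ s) : b.repr x j = 0 := by
  rw [← b.coe_toBasis, b.toBasis.mem_span_image] at hx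
  rw [← b.coe_toBasis_repr_apply]
  exact Finsupp.notMem_support_iff.mp fun h => hj (hx h)

namespace Tuple

variable {α : Type*} [LinearOrder α] {n : ℕ}

theorem add_one_le_card_filter_le_sort (f : Fin n → α) (k : Fin n) :
    (k : ℕ) + 1 ≤ #{i | f i ≤ f (sort f k)} := by
  rw [← Fin.card_Iic, ← card_map (sort f).toEmbedding]
  refine card_le_card fun i hi => ?_
  obtain ⟨j, hj, rfl⟩ := mem_map.mp hi
  exact mem_filter.mpr ⟨mem_univ _, monotone_sort f (mem_Iic.mp hj)⟩

theorem sub_le_card_filter_sort_le (f : Fin n → α) (k : Fin n) :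
    n - k ≤ #{i | f (sort f k) ≤ f i} := by
  rw [← Fin.card_Ici, ← card_map (sort f).toEmbedding]
  refine card_le_card fun i hi => ?_
  obtain ⟨j, hj, rfl⟩ := mem_map.mp hi
  exact mem_filter.mpr ⟨mem_univ _, monotone_sort f (mem_Ici.mp hj)⟩

end Tuple

namespace Matrix

variable {𝕜 : Type*} [RCLike 𝕜] {m n : Type*} [Fintype m] [Fintype n] [DecidableEq n]

theorem IsHermitian.toEuclideanLin_eigenvectorBasis {H : Matrix n n 𝕜} (hH : H.IsHermitian)
    (j : n) :
    toEuclideanLin H (hH.eigenvectorBasis j) = (hH.eigenvalues j : 𝕜) • hH.eigenvectorBasis j := by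
  apply WithLp.ofLp_injective 2
  rw [ofLp_toLpLin, toLin'_apply, hH.mulVec_eigenvectorBasis, WithLp.ofLp_smul,
    RCLike.real_smul_eq_coe_smul (K := 𝕜)]

theorem IsHermitian.repr_toEuclideanLin {H : Matrix n n 𝕜} (hH : H.IsHermitian)
    (x : EuclideanSpace 𝕜 n) (j : n) :
    hH.eigenvectorBasis.repr (toEuclideanLin H x) j =
      hH.eigenvalues j * hH.eigenvectorBasis.repr x j := by
  rw [OrthonormalBasis.repr_apply_apply, OrthonormalBasis.repr_apply_apply,
    ← isSymmetric_toEuclideanLin_iff.mpr hH, hH.toEuclideanLin_eigenvectorBasis, inner_smul_left,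
    RCLike.conj_ofReal]

theorem IsHermitian.re_inner_toEuclideanLin {H : Matrix n n 𝕜} (hH : H.IsHermitian)
    (x : EuclideanSpace 𝕜 n) :
    RCLike.re (inner 𝕜 x (toEuclideanLin H x)) =
      ∑ j, hH.eigenvalues j * ‖hH.eigenvectorBasis.repr x j‖ ^ 2 := by
  rw [← hH.eigenvectorBasis.repr.inner_map_map, PiLp.inner_apply, map_sum]
  refine sum_congr rfl fun j _ => ?_
  rw [hH.repr_toEuclideanLin, RCLike.inner_apply, mul_assoc, RCLike.mul_conj, ← RCLike.ofReal_pow,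
    ← RCLike.ofReal_mul, RCLike.ofReal_re]

theorem norm_toEuclideanLin_sq (M : Matrix m n 𝕜) (hH : (Mᴴ * M).IsHermitian)
    (x : EuclideanSpace 𝕜 n) :
    ‖toEuclideanLin M x‖ ^ 2 = ∑ j, hH.eigenvalues j * ‖hH.eigenvectorBasis.repr x j‖ ^ 2 := by
  classical
  rw [← hH.re_inner_toEuclideanLin, toLpLin_mul_same, LinearMap.comp_apply,
    toEuclideanLin_conjTranspose_eq_adjoint, LinearMap.adjoint_inner_right, inner_self_eq_norm_sq]

theorem norm_toEuclideanLin_sq_le_of_mem_span (M : Matrix m n 𝕜) (hH : (Mᴴ * M).IsHermitian)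
    {c : ℝ} {s : Set n} (hs : ∀ j ∈ s, hH.eigenvalues j ≤ c) {x : EuclideanSpace 𝕜 n}
    (hx : x ∈ span 𝕜 (hH.eigenvectorBasis '' s)) :
    ‖toEuclideanLin M x‖ ^ 2 ≤ c * ‖x‖ ^ 2 := by
  rw [norm_toEuclideanLin_sq, ← hH.eigenvectorBasis.repr.norm_map, EuclideanSpace.norm_sq_eq,
    mul_sum]
  refine sum_le_sum fun j _ => ?_
  by_cases hj : j ∈ s
  · exact mul_le_mul_of_nonneg_right (hs j hj) (sq_nonneg _)
  · simp [hH.eigenvectorBasis.repr_eq_zero_of_mem_span_image hx hj]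

theorem le_norm_toEuclideanLin_sq_of_mem_span (M : Matrix m n 𝕜) (hH : (Mᴴ * M).IsHermitian)
    {c : ℝ} {s : Set n} (hs : ∀ j ∈ s, c ≤ hH.eigenvalues j) {x : EuclideanSpace 𝕜 n}
    (hx : x ∈ span 𝕜 (hH.eigenvectorBasis '' s)) :
    c * ‖x‖ ^ 2 ≤ ‖toEuclideanLin M x‖ ^ 2 := by
  rw [norm_toEuclideanLin_sq, ← hH.eigenvectorBasis.repr.norm_map, EuclideanSpace.norm_sq_eq,
    mul_sum]
  refine sum_le_sum fun j _ => ?_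
  by_cases hj : j ∈ s
  · exact mul_le_mul_of_nonneg_right (hs j hj) (sq_nonneg _)
  · simp [hH.eigenvectorBasis.repr_eq_zero_of_mem_span_image hx hj]

end Matrix

section SingularValues

variable {p q : ℕ}

theorem sv_nonneg (M : Matrix (Fin p) (Fin q) ℂ) (i : ℕ) : 0 ≤ sv M i := by
  unfold sv
  split_ifs
  exacts [Real.sqrt_nonneg _, le_rfl]

theorem sv_eq_zero_of_lt (M : Matrix (Fin p) (Fin q) ℂ) {i : ℕ} (hi : q < i) : sv M i = 0 :=
  dif_neg (by omega)

theorem exists_submodule_sv_mul_norm_le (M : Matrix (Fin p) (Fin q) ℂ) {i : ℕ} (hi : 1 ≤ i)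
    (hiq : i ≤ q) :
    ∃ U : Submodule ℂ (EuclideanSpace ℂ (Fin q)),
      i ≤ finrank ℂ U ∧ ∀ x ∈ U, sv M i * ‖x‖ ≤ ‖toEuclideanLin M x‖ := by
  set hP := posSemidef_conjTranspose_mul_self M
  set μ := hP.1.eigenvalues
  set t := μ (Tuple.sort μ ⟨q - i, by omega⟩)
  have hsv : sv M i = √t := dif_pos ⟨hi, hiq⟩
  refine ⟨span ℂ (hP.1.eigenvectorBasis '' ↑({j | t ≤ μ j} : Finset (Fin q))), ?_, fun x hx => ?_⟩
  · rw [hP.1.eigenvectorBasis.orthonormal.linearIndependent.finrank_span_image_finset]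
    have hcard : q - (q - i) ≤ #{j | t ≤ μ j} :=
      Tuple.sub_le_card_filter_sort_le μ ⟨q - i, by omega⟩
    omega
  · refine le_of_pow_le_pow_left₀ two_ne_zero (norm_nonneg _) ?_
    rw [hsv, mul_pow, Real.sq_sqrt (hP.eigenvalues_nonneg _)]
    exact le_norm_toEuclideanLin_sq_of_mem_span M hP.1 (fun j hj => (mem_filter.mp hj).2) hx

theorem exists_submodule_norm_le_sv_mul (M : Matrix (Fin p) (Fin q) ℂ) {i : ℕ} (hi : 1 ≤ i) :
    ∃ V : Submodule ℂ (EuclideanSpace ℂ (Fin q)),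
      q < finrank ℂ V + i ∧ ∀ x ∈ V, ‖toEuclideanLin M x‖ ≤ sv M i * ‖x‖ := by
  by_cases hiq : q < i
  · refine ⟨⊥, by simpa using hiq, fun x hx => ?_⟩
    simp [(mem_bot ℂ).mp hx]
  set hP := posSemidef_conjTranspose_mul_self M
  set μ := hP.1.eigenvalues
  set t := μ (Tuple.sort μ ⟨q - i, by omega⟩)
  have hsv : sv M i = √t := dif_pos ⟨hi, not_lt.mp hiq⟩
  refine ⟨span ℂ (hP.1.eigenvectorBasis '' ↑({j | μ j ≤ t} : Finset (Fin q))), ?_, fun x hx => ?_⟩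
  · rw [hP.1.eigenvectorBasis.orthonormal.linearIndependent.finrank_span_image_finset]
    have hcard : q - i + 1 ≤ #{j | μ j ≤ t} :=
      Tuple.add_one_le_card_filter_le_sort μ ⟨q - i, by omega⟩
    omega
  · refine le_of_pow_le_pow_left₀ two_ne_zero (by rw [hsv]; positivity) ?_
    rw [hsv, mul_pow, Real.sq_sqrt (hP.eigenvalues_nonneg _)]
    exact norm_toEuclideanLin_sq_le_of_mem_span M hP.1 (fun j hj => (mem_filter.mp hj).2) hx

end SingularValues

/-- Ky Fan singular value inequality for products. -/
theorem sv_mul_le {p q r : ℕ} (A : Matrix (Fin p) (Fin q) ℂ) (B : Matrix (Fin q) (Fin r) ℂ)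
    (m n : ℕ) :
    sv (A * B) (m + n + 1) ≤ sv A (m + 1) * sv B (n + 1) := by
  by_cases hk : r < m + n + 1
  · rw [sv_eq_zero_of_lt _ hk]
    exact mul_nonneg (sv_nonneg _ _) (sv_nonneg _ _)
  obtain ⟨U, hU, hABU⟩ := exists_submodule_sv_mul_norm_le (A * B) (by omega) (not_lt.mp hk)
  obtain ⟨W, hW, hBW⟩ := exists_submodule_norm_le_sv_mul B (Nat.le_add_left 1 n)
  obtain ⟨V, hV, hAV⟩ := exists_submodule_norm_le_sv_mul A (Nat.le_add_left 1 m)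
  have hcomap := finrank_add_finrank_le_finrank_comap_add (toEuclideanLin B) V
  have hinf := finrank_add_finrank_le_finrank_inf_add W (V.comap (toEuclideanLin B))
  simp only [finrank_euclideanSpace_fin] at hcomap hinf
  obtain ⟨x, ⟨hxU, hxW, hxV⟩, hx⟩ :=
    exists_mem_inf_ne_zero_of_finrank_lt (s := U) (t := W ⊓ V.comap (toEuclideanLin B)) (by
      rw [finrank_euclideanSpace_fin]; omega)
  refine le_of_mul_le_mul_right ?_ (norm_pos_iff.mpr hx)
  calc sv (A * B) (m + n + 1) * ‖x‖
      ≤ ‖toEuclideanLin (A * B) x‖ := hABU x hxU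
    _ = ‖toEuclideanLin A (toEuclideanLin B x)‖ := by rw [toLpLin_mul_same]; rfl
    _ ≤ sv A (m + 1) * ‖toEuclideanLin B x‖ := hAV _ hxV
    _ ≤ sv A (m + 1) * (sv B (n + 1) * ‖x‖) :=
        mul_le_mul_of_nonneg_left (hBW x hxW) (sv_nonneg _ _)
    _ = sv A (m + 1) * sv B (n + 1) * ‖x‖ := (mul_assoc ..).symm
end

section
/- For N×N Hermitian matrices A and B, the supremum norm of the difference of their empirical spectral distribution functions satisfies ‖F^A − F^B‖ ≤ (1/N) rank(A − B). -/
/-!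
Let `r = rank (T - S)`. The span of the eigenvectors of `S` with eigenvalue `≤ x` has dimension
`#{λ(S) ≤ x}`, and on it `re ⟪v, S v⟫ ≤ x ‖v‖²`. Intersecting it with `ker (T - S)` costs at most
`r` dimensions, and on the intersection `⟪v, T v⟫ = ⟪v, S v⟫`. On the span of the eigenvectors of
`T` with eigenvalue `> x`, however, `re ⟪v, T v⟫ > x ‖v‖²` for `v ≠ 0`, so the two subspaces are
independent: `#{λ(S) ≤ x} - r + #{λ(T) > x} ≤ N`, i.e. `#{λ(S) ≤ x} ≤ #{λ(T) ≤ x} + r`.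
Exchanging `T` and `S` bounds `|F^T - F^S|`.
-/

open Matrix

/-- The empirical spectral distribution function of a Hermitian `N × N` matrix:
`F^M(x)` is the fraction of eigenvalues that are `≤ x`. -/
noncomputable def esd {N : ℕ} {M : Matrix (Fin N) (Fin N) ℂ} (hM : M.IsHermitian)
    (x : ℝ) : ℝ :=
  ((Finset.univ.filter fun i => hM.eigenvalues i ≤ x).card : ℝ) / N

open Finset Module

theorem Submodule.finrank_add_finrank_add_finrank_le_of_disjoint_inf {K V : Type*}
    [DivisionRing K] [AddCommGroup V] [Module K V] [FiniteDimensional K V] {W₁ W₂ U : Submodule K V}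
    (h : Disjoint (W₁ ⊓ W₂) U) :
    finrank K W₁ + finrank K W₂ + finrank K U ≤ 2 * finrank K V := by
  have := Submodule.finrank_add_finrank_le_of_disjoint h
  have := Submodule.finrank_sup_add_finrank_inf_eq W₁ W₂
  have := (W₁ ⊔ W₂).finrank_le
  omega

namespace OrthonormalBasis

variable {𝕜 E ι : Type*} [RCLike 𝕜] [NormedAddCommGroup E] [InnerProductSpace 𝕜 E] [Fintype ι]
  (e : OrthonormalBasis ι 𝕜 E)

theorem finrank_span_image_setOf (p : ι → Prop) [DecidablePred p] :
    finrank 𝕜 (Submodule.span 𝕜 (e '' {i | p i})) = #{i | p i} := by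
  rw [Set.image_eq_range]
  exact (finrank_span_eq_card (e.orthonormal.linearIndependent.comp _ Subtype.val_injective)).trans
    (Fintype.card_subtype _)

theorem repr_apply_eq_zero_of_mem_span_image {s : Set ι} {v : E}
    (hv : v ∈ Submodule.span 𝕜 (e '' s)) {i : ι} (hi : i ∉ s) : e.repr v i = 0 := by
  rw [← e.coe_toBasis, Basis.mem_span_image] at hv
  rw [← e.coe_toBasis_repr_apply]
  exact Finsupp.notMem_support_iff.mp fun h => hi (hv h)

theorem sum_sq_norm_repr (v : E) : ∑ i, ‖e.repr v i‖ ^ 2 = ‖v‖ ^ 2 := by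
  rw [← e.repr.norm_map v, EuclideanSpace.norm_sq_eq]

variable {T : E →ₗ[𝕜] E} {μ : ι → ℝ}

theorem re_inner_map_self_eq_sum (hT : ∀ i, T (e i) = (μ i : 𝕜) • e i) (v : E) :
    RCLike.re (inner 𝕜 v (T v)) = ∑ i, μ i * ‖e.repr v i‖ ^ 2 := by
  have hTv : T v = ∑ i, (μ i * e.repr v i : 𝕜) • e i := by
    conv_lhs => rw [← e.sum_repr v]
    simp [hT, smul_smul, mul_comm]
  rw [hTv, inner_sum, map_sum]
  refine Finset.sum_congr rfl fun i _ => ?_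
  rw [inner_smul_right, ← inner_conj_symm, ← e.repr_apply_apply, mul_assoc, RCLike.mul_conj]
  norm_cast

theorem re_inner_map_self_le_of_mem_span (hT : ∀ i, T (e i) = (μ i : 𝕜) • e i) {x : ℝ} {v : E}
    (hv : v ∈ Submodule.span 𝕜 (e '' {i | μ i ≤ x})) :
    RCLike.re (inner 𝕜 v (T v)) ≤ x * ‖v‖ ^ 2 := by
  rw [e.re_inner_map_self_eq_sum hT, ← e.sum_sq_norm_repr, mul_sum]
  refine sum_le_sum fun i _ => ?_
  by_cases hi : μ i ≤ x
  · gcongr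
  · simp [e.repr_apply_eq_zero_of_mem_span_image hv hi]

theorem lt_re_inner_map_self_of_mem_span (hT : ∀ i, T (e i) = (μ i : 𝕜) • e i) {x : ℝ} {v : E}
    (hv : v ∈ Submodule.span 𝕜 (e '' {i | x < μ i})) (hv₀ : v ≠ 0) :
    x * ‖v‖ ^ 2 < RCLike.re (inner 𝕜 v (T v)) := by
  rw [e.re_inner_map_self_eq_sum hT, ← e.sum_sq_norm_repr, mul_sum]
  obtain ⟨j, hj⟩ : ∃ j, e.repr v j ≠ 0 := by
    by_contra! h
    exact hv₀ (e.repr.map_eq_zero_iff.mp (PiLp.ext h))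
  have hμj : x < μ j := by
    by_contra hj'
    exact hj (e.repr_apply_eq_zero_of_mem_span_image hv hj')
  refine sum_lt_sum (fun i _ => ?_) ⟨j, mem_univ j, by gcongr⟩
  by_cases hi : x < μ i
  · gcongr
  · simp [e.repr_apply_eq_zero_of_mem_span_image hv hi]

end OrthonormalBasis

theorem card_filter_le_le_add_finrank_range_sub {𝕜 E ι κ : Type*} [RCLike 𝕜]
    [NormedAddCommGroup E] [InnerProductSpace 𝕜 E] [Fintype ι] [Fintype κ]
    (eT : OrthonormalBasis ι 𝕜 E) (eS : OrthonormalBasis κ 𝕜 E) {T S : E →ₗ[𝕜] E}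
    {μ : ι → ℝ} {ν : κ → ℝ} (hT : ∀ i, T (eT i) = (μ i : 𝕜) • eT i)
    (hS : ∀ k, S (eS k) = (ν k : 𝕜) • eS k) (x : ℝ) :
    #{k | ν k ≤ x} ≤ #{i | μ i ≤ x} + finrank 𝕜 (LinearMap.range (T - S)) := by
  classical
  have : FiniteDimensional 𝕜 E := eT.toBasis.finiteDimensional_of_finite
  have hdisj : Disjoint (Submodule.span 𝕜 (eS '' {k | ν k ≤ x}) ⊓ LinearMap.ker (T - S))
      (Submodule.span 𝕜 (eT '' {i | x < μ i})) := by
    refine Submodule.disjoint_def.mpr fun v ⟨hvS, hvK⟩ hvT => ?_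
    by_contra hv₀
    have hTS : T v = S v := sub_eq_zero.mp hvK
    have := eS.re_inner_map_self_le_of_mem_span hS hvS
    have := eT.lt_re_inner_map_self_of_mem_span hT hvT hv₀
    rw [hTS] at this
    linarith
  have hdim := Submodule.finrank_add_finrank_add_finrank_le_of_disjoint_inf hdisj
  rw [eS.finrank_span_image_setOf, eT.finrank_span_image_setOf] at hdim
  have hrank := (T - S).finrank_range_add_finrank_ker
  have hcard := card_filter_add_card_filter_not (s := univ) fun i => μ i ≤ x
  simp only [not_le, card_univ, ← finrank_eq_card_basis eT.toBasis] at hcard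
  omega

namespace Matrix

theorem rank_sub_comm {m n R : Type*} [Fintype n] [CommRing R]
    (A B : Matrix m n R) : (A - B).rank = (B - A).rank := by
  classical
  rw [rank, rank, ← neg_sub B A, ← toLin'_apply', ← toLin'_apply', map_neg, LinearMap.range_neg]

variable {𝕜 m n : Type*} [RCLike 𝕜] [Fintype m] [Fintype n] [DecidableEq n]

theorem rank_eq_finrank_range_toEuclideanLin (A : Matrix m n 𝕜) :
    A.rank = finrank 𝕜 (LinearMap.range (toEuclideanLin A)) := by
  rw [toEuclideanLin_eq_toLin_orthonormal]
  exact A.rank_eq_finrank_range_toLin _ _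

theorem IsHermitian.toEuclideanLin_eigenvectorBasis_s13 {A : Matrix n n 𝕜} (hA : A.IsHermitian)
    (j : n) :
    toEuclideanLin A (hA.eigenvectorBasis j) = (hA.eigenvalues j : 𝕜) • hA.eigenvectorBasis j := by
  apply WithLp.ofLp_injective
  simp [toLpLin_apply, hA.mulVec_eigenvectorBasis]

end Matrix

/-- The rank inequality for empirical spectral distributions (Lemma 2.4 of Silverstein
and Bai): `‖F^A − F^B‖ ≤ rank(A − B) / N`. -/
theorem esd_diff_le_rank {N : ℕ} (A B : Matrix (Fin N) (Fin N) ℂ)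
    (hA : A.IsHermitian) (hB : B.IsHermitian) (x : ℝ) :
    |esd hA x - esd hB x| ≤ ((A - B).rank : ℝ) / N := by
  have hBA := card_filter_le_le_add_finrank_range_sub hA.eigenvectorBasis hB.eigenvectorBasis
    hA.toEuclideanLin_eigenvectorBasis_s13 hB.toEuclideanLin_eigenvectorBasis_s13 x
  have hAB := card_filter_le_le_add_finrank_range_sub hB.eigenvectorBasis hA.eigenvectorBasis
    hB.toEuclideanLin_eigenvectorBasis_s13 hA.toEuclideanLin_eigenvectorBasis_s13 x
  rw [← map_sub, ← rank_eq_finrank_range_toEuclideanLin] at hBA hAB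
  rw [rank_sub_comm B A] at hAB
  rw [esd, esd, div_sub_div_same, abs_div, Nat.abs_cast]
  gcongr
  rw [abs_sub_le_iff, sub_le_iff_le_add', sub_le_iff_le_add']
  exact ⟨by exact_mod_cast hAB, by exact_mod_cast hBA⟩
end

section
/- Let f : (0,∞) → ℝ be given by f(P) = log det(I + c·e·R·P') where R is an n×n Hermitian positive definite matrix with eigenvalues d_1 ≥ … ≥ d_n, c, e > 0, and P' ranges over Hermitian positive semidefinite matrices with (1/n)·tr(P') ≤ P. Then the maximum of log det(I + c·e·R·P') over this constraint set is attained at a matrix P' that commutes with R (is codiagonalizable with R), whose eigenvalues p_i in the eigenbasis of R satisfy the water-filling form p_i = max(μ − 1/(c·e·d_i), 0) for a constant μ chosen so that (1/n)∑_i p_i = P. -/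
open Matrix
open scoped ComplexOrder

/-!
Diagonalise `R = U D U*` and put `a i = c e d i`. For `B = U* Q U`, Sylvester's identity
`det (1 + X Y) = det (1 + Y X)` gives `det (1 + c e R Q) = det (1 + √a B √a)`, the determinant
of a positive definite matrix with diagonal entries `1 + a i B i i`; by Hadamard's inequality
it is at most `∏ i, (1 + a i B i i)`, with equality when `B` is diagonal, and `tr B = tr Q`.
So it suffices to maximise the concave function `∑ i, log (1 + a i t i)` over `t ≥ 0` with
`∑ i, t i ≤ n P`. At the water-filling point `p` every slope `a i / (1 + a i p i)` is at most
`1 / μ`, with equality where `p i > 0`, so the tangent-line bound at `p` shows that `p` is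
optimal.
-/

theorem Unitary.star_mul_conj_mul {A : Type*} [Monoid A] [StarMul A] (u : unitary A) (x : A) :
    star (u : A) * ((u : A) * x * star (u : A)) * u = x := by
  simp only [← mul_assoc, Unitary.coe_star_mul_self, one_mul]
  rw [mul_assoc, Unitary.coe_star_mul_self, mul_one]

theorem Real.prod_le_one_of_sum_eq_card {ι : Type*} [Fintype ι] {x : ι → ℝ}
    (hx : ∀ i, 0 ≤ x i) (hsum : ∑ i, x i = Fintype.card ι) : ∏ i, x i ≤ 1 :=
  calc ∏ i, x i ≤ ∏ i, Real.exp (x i - 1) :=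
        Finset.prod_le_prod (fun i _ => hx i) fun i _ => by
          linarith [Real.add_one_le_exp (x i - 1)]
    _ = 1 := by simp [← Real.exp_sum, Finset.sum_sub_distrib, hsum]

theorem Real.log_le_log_add_div_of_pos {x y : ℝ} (hx : 0 < x) (hy : 0 < y) :
    Real.log x ≤ Real.log y + (x - y) / y := by
  have := Real.log_le_sub_one_of_pos (div_pos hx hy)
  rw [Real.log_div hx.ne' hy.ne'] at this
  have : x / y - 1 = (x - y) / y := by field_simp
  linarith

/-- `max (μ - 1 / a) 0` maximises `x ↦ log (1 + a x) - x / μ` on `x ≥ 0`. -/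
theorem Real.log_one_add_mul_le_waterfilling {a t μ : ℝ} (ha : 0 < a) (ht : 0 ≤ t)
    (hμ : 0 < μ) :
    Real.log (1 + a * t) ≤
      Real.log (1 + a * max (μ - 1 / a) 0) + (t - max (μ - 1 / a) 0) / μ := by
  set p := max (μ - 1 / a) 0
  have hp : 0 ≤ p := le_max_right _ _
  have tangent := Real.log_le_log_add_div_of_pos (x := 1 + a * t) (y := 1 + a * p)
    (by positivity) (by positivity)
  suffices (1 + a * t - (1 + a * p)) / (1 + a * p) ≤ (t - p) / μ by linarith
  rcases le_or_gt (μ - 1 / a) 0 with h | h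
  · have hp0 : p = 0 := max_eq_right h
    have : a * μ ≤ 1 := by
      rw [sub_nonpos, le_div_iff₀ ha] at h; linarith
    rw [hp0, le_div_iff₀ hμ]
    simp only [mul_zero, add_zero, sub_zero, div_one, add_sub_cancel_left]
    nlinarith
  · have hpμ : p = μ - 1 / a := max_eq_left h.le
    have : 1 + a * p = a * μ := by rw [hpμ]; field_simp; ring
    rw [add_sub_add_left_eq_sub, ← mul_sub, this, mul_div_mul_left _ _ ha.ne']

theorem Real.prod_one_add_mul_le_waterfilling {ι : Type*} [Fintype ι] {a t : ι → ℝ}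
    (ha : ∀ i, 0 < a i) (ht : ∀ i, 0 ≤ t i) {μ : ℝ} (hμ : 0 < μ)
    (hsum : ∑ i, t i ≤ ∑ i, max (μ - 1 / a i) 0) :
    ∏ i, (1 + a i * t i) ≤ ∏ i, (1 + a i * max (μ - 1 / a i) 0) := by
  have hpos : ∀ s : ι → ℝ, (∀ i, 0 ≤ s i) → 0 < ∏ i, (1 + a i * s i) := fun s hs =>
    Finset.prod_pos fun i _ => by have := ha i; have := hs i; positivity
  rw [← Real.log_le_log_iff (hpos t ht) (hpos _ fun i => le_max_right _ _),
    Real.log_prod fun i _ => by have := ha i; have := ht i; positivity,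
    Real.log_prod fun i _ => by have := ha i; have := le_max_right (μ - 1 / a i) 0; positivity]
  calc ∑ i, Real.log (1 + a i * t i)
      ≤ ∑ i, (Real.log (1 + a i * max (μ - 1 / a i) 0) + (t i - max (μ - 1 / a i) 0) / μ) :=
        Finset.sum_le_sum fun i _ => Real.log_one_add_mul_le_waterfilling (ha i) (ht i) hμ
    _ ≤ ∑ i, Real.log (1 + a i * max (μ - 1 / a i) 0) := by
        rw [Finset.sum_add_distrib, ← Finset.sum_div, Finset.sum_sub_distrib]
        have : (∑ i, t i - ∑ i, max (μ - 1 / a i) 0) / μ ≤ 0 :=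
          div_nonpos_of_nonpos_of_nonneg (by linarith) hμ.le
        linarith

theorem exists_waterLevel {ι : Type*} [Fintype ι] [Nonempty ι] {b : ι → ℝ}
    (hb : ∀ i, 0 < b i) {S : ℝ} (hS : 0 < S) :
    ∃ μ, 0 < μ ∧ ∑ i, max (μ - b i) 0 = S := by
  set g : ℝ → ℝ := fun μ => ∑ i, max (μ - b i) 0
  have hg : Continuous g := by fun_prop
  have hg_nonpos : ∀ μ ≤ 0, g μ = 0 := fun μ hμ =>
    Finset.sum_eq_zero fun i _ => max_eq_right (by linarith [hb i])
  obtain ⟨i₀⟩ := ‹Nonempty ι›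
  have hgM : S ≤ g (S + b i₀) :=
    calc S = S + b i₀ - b i₀ := by ring
      _ ≤ max (S + b i₀ - b i₀) 0 := le_max_left _ _
      _ ≤ g (S + b i₀) :=
        Finset.single_le_sum (f := fun i => max (S + b i₀ - b i)  0)
          (fun i _ => le_max_right _ _) (Finset.mem_univ i₀)
  obtain ⟨μ, -, hμ⟩ := intermediate_value_Icc (by linarith [hb i₀]) hg.continuousOn
    ⟨(hg_nonpos 0 le_rfl).trans_le hS.le, hgM⟩
  refine ⟨μ, ?_, hμ⟩
  by_contra! h
  linarith [hg_nonpos μ h]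

namespace Matrix

variable {𝕜 ι : Type*} [RCLike 𝕜] [Fintype ι] [DecidableEq ι]

theorem PosSemidef.re_det_le_one_of_diag_eq_one {A : Matrix ι ι 𝕜} (hA : A.PosSemidef)
    (hdiag : ∀ i, A i i = 1) : RCLike.re A.det ≤ 1 := by
  have htrace : ∑ i, hA.1.eigenvalues i = Fintype.card ι := by
    have := hA.1.trace_eq_sum_eigenvalues
    simp only [trace, diag, hdiag, Finset.sum_const, Finset.card_univ, nsmul_eq_mul,
      mul_one] at this
    exact_mod_cast this.symm
  rw [hA.1.det_eq_prod_eigenvalues, ← RCLike.ofReal_prod, RCLike.ofReal_re]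
  exact Real.prod_le_one_of_sum_eq_card hA.eigenvalues_nonneg htrace

/-- Hadamard's inequality: rescale `A` to unit diagonal, then use AM-GM on the eigenvalues. -/
theorem PosDef.re_det_le_prod_re_diag {A : Matrix ι ι 𝕜} (hA : A.PosDef) :
    RCLike.re A.det ≤ ∏ i, RCLike.re (A i i) := by
  have hpos : ∀ i, 0 < RCLike.re (A i i) := fun i => (RCLike.pos_iff.mp hA.diag_pos).1
  set E : Matrix ι ι 𝕜 := diagonal fun i => ((√(RCLike.re (A i i)))⁻¹ : ℝ)
  have hEH : Eᴴ = E := by simp [E, diagonal_conjTranspose]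
  have hN : (E * A * E).PosSemidef := by
    simpa only [hEH] using hA.posSemidef.mul_mul_conjTranspose_same E
  have hdiag : ∀ i, (E * A * E) i i = 1 := by
    intro i
    rw [mul_diagonal, diagonal_mul, ← hA.1.coe_re_apply_self i]
    have hne := (Real.sqrt_pos.mpr (hpos i)).ne'
    norm_cast
    field_simp
    exact (Real.sq_sqrt (hpos i).le).symm
  have hdet : (E * A * E).det = (((∏ i, RCLike.re (A i i))⁻¹ : ℝ) : 𝕜) * A.det := by
    have hE : E.det * E.det = (((∏ i, RCLike.re (A i i))⁻¹ : ℝ) : 𝕜) := by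
      simp only [E, det_diagonal, ← Finset.prod_mul_distrib, ← RCLike.ofReal_mul, ← mul_inv,
        Real.mul_self_sqrt (hpos _).le]
      push_cast
      exact Finset.prod_inv_distrib _
    rw [det_mul, det_mul, ← hE]
    ring
  have := hN.re_det_le_one_of_diag_eq_one hdiag
  rwa [hdet, RCLike.re_ofReal_mul, inv_mul_le_iff₀ (Finset.prod_pos fun i _ => hpos i),
    mul_one] at this

theorem det_one_add_mul_mul_mul_comm {R : Type*} [CommRing R] (U D V X : Matrix ι ι R) :
    det (1 + U * D * V * X) = det (1 + D * (V * X * U)) := by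
  rw [mul_assoc, mul_assoc, det_one_add_mul_comm, mul_assoc, mul_assoc]

theorem PosSemidef.re_det_one_add_diagonal_mul_le {a : ι → ℝ} (ha : ∀ i, 0 ≤ a i)
    {B : Matrix ι ι 𝕜} (hB : B.PosSemidef) :
    0 < RCLike.re (det (1 + diagonal (fun i => (a i : 𝕜)) * B)) ∧
      RCLike.re (det (1 + diagonal (fun i => (a i : 𝕜)) * B)) ≤
        ∏ i, (1 + a i * RCLike.re (B i i)) := by
  set S : Matrix ι ι 𝕜 := diagonal fun i => (√(a i) : 𝕜)
  have hSS : S * S = diagonal fun i => (a i : 𝕜) := by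
    simp [S, diagonal_mul_diagonal, ← RCLike.ofReal_mul, Real.mul_self_sqrt (ha _)]
  have hSH : Sᴴ = S := by simp [S, diagonal_conjTranspose]
  have hdet : det (1 + diagonal (fun i => (a i : 𝕜)) * B) = det (1 + S * B * S) := by
    rw [← hSS, mul_assoc, det_one_add_mul_comm, mul_assoc]
  have hM : (1 + S * B * S).PosDef := by
    refine PosDef.one.add_posSemidef ?_
    simpa only [hSH] using hB.mul_mul_conjTranspose_same S
  rw [hdet]
  refine ⟨(RCLike.pos_iff.mp hM.det_pos).1, hM.re_det_le_prod_re_diag.trans_eq ?_⟩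
  refine Finset.prod_congr rfl fun i _ => ?_
  have hsq : √(a i) * RCLike.re (B i i) * √(a i) = a i * RCLike.re (B i i) := by
    rw [mul_right_comm, Real.mul_self_sqrt (ha i)]
  simp [S, mul_diagonal, diagonal_mul, hsq]

theorem re_det_one_add_diagonal_mul_diagonal (a b : ι → ℝ) :
    RCLike.re (det (1 + diagonal (fun i => (a i : 𝕜)) * diagonal (fun i => (b i : 𝕜)))) =
      ∏ i, (1 + a i * b i) := by
  rw [diagonal_mul_diagonal, ← diagonal_one, diagonal_add, det_diagonal]
  norm_cast

theorem IsHermitian.det_one_add_smul_mul {R : Matrix ι ι 𝕜} (hR : R.IsHermitian) (k : ℝ)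
    (X : Matrix ι ι 𝕜) :
    det (1 + k • (R * X)) =
      det (1 + diagonal (fun i => ((k * hR.eigenvalues i : ℝ) : 𝕜)) *
        (star (hR.eigenvectorUnitary : Matrix ι ι 𝕜) * X *
          (hR.eigenvectorUnitary : Matrix ι ι 𝕜))) := by
  conv_lhs => rw [hR.spectral_theorem, Unitary.conjStarAlgAut_apply]
  rw [← det_one_add_mul_mul_mul_comm]
  have : diagonal (fun i => ((k * hR.eigenvalues i : ℝ) : 𝕜)) =
      k • diagonal (RCLike.ofReal ∘ hR.eigenvalues) := by
    rw [← diagonal_smul]; congr 1; ext i; simp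
  rw [this]
  simp only [Matrix.mul_smul, Matrix.smul_mul]

theorem IsHermitian.commute_conj_diagonal {R : Matrix ι ι 𝕜} (hR : R.IsHermitian)
    (d : ι → 𝕜) :
    Commute R ((hR.eigenvectorUnitary : Matrix ι ι 𝕜) * diagonal d *
      star (hR.eigenvectorUnitary : Matrix ι ι 𝕜)) := by
  have h := (commute_diagonal (RCLike.ofReal ∘ hR.eigenvalues) d).map
    (Unitary.conjStarAlgAut 𝕜 _ hR.eigenvectorUnitary)
  rwa [← hR.spectral_theorem, Unitary.conjStarAlgAut_apply] at h

theorem PosDef.log_re_det_one_add_smul_mul_le_waterfilling {R Q : Matrix ι ι 𝕜} (hR : R.PosDef)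
    (hQ : Q.PosSemidef) {k μ : ℝ} (hk : 0 < k) (hμ : 0 < μ) {p : ι → ℝ}
    (hp : ∀ i, p i = max (μ - 1 / (k * hR.1.eigenvalues i)) 0)
    (htrace : RCLike.re Q.trace ≤ ∑ i, p i) :
    Real.log (RCLike.re (det (1 + k • (R * Q)))) ≤
      Real.log (RCLike.re (det (1 + k • (R * ((hR.1.eigenvectorUnitary : Matrix ι ι 𝕜) *
        diagonal (fun i => (p i : 𝕜)) *
          star (hR.1.eigenvectorUnitary : Matrix ι ι 𝕜)))))) := by
  set U : Matrix ι ι 𝕜 := (hR.1.eigenvectorUnitary : Matrix ι ι 𝕜)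
  set a : ι → ℝ := fun i => k * hR.1.eigenvalues i
  have ha : ∀ i, 0 < a i := fun i => mul_pos hk (hR.eigenvalues_pos i)
  set B := star U * Q * U
  have hB : B.PosSemidef := by
    simpa only [B, star_eq_conjTranspose] using hQ.conjTranspose_mul_mul_same U
  have hBtrace : ∑ i, RCLike.re (B i i) ≤ ∑ i, max (μ - 1 / a i) 0 := by
    rw [← map_sum, ← funext hp]
    change RCLike.re B.trace ≤ _
    rwa [trace_mul_comm, ← mul_assoc, show U * star U = 1 from Unitary.coe_mul_star_self _,
      one_mul]
  obtain ⟨hpos, hle⟩ := hB.re_det_one_add_diagonal_mul_le fun i => (ha i).le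
  rw [hR.1.det_one_add_smul_mul, hR.1.det_one_add_smul_mul, Unitary.star_mul_conj_mul,
    re_det_one_add_diagonal_mul_diagonal, funext hp]
  exact Real.log_le_log hpos <| hle.trans <| Real.prod_one_add_mul_le_waterfilling ha
    (fun i => (RCLike.nonneg_iff.mp hB.diag_nonneg).1) hμ hBtrace

end Matrix

/-- Water-filling: the maximum of `log det (I + c e R P')` over Hermitian positive
semidefinite `P'` with `(1/n) tr P' ≤ P` is attained at a matrix commuting with `R`,
whose eigenvalues in the eigenbasis of `R` have the water-filling form
`p_i = max (μ - 1/(c e d_i)) 0`, with `μ` such that `(1/n) ∑ p_i = P`. -/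
theorem waterfilling_maximizer {n : ℕ} (hn : 0 < n) (R : Matrix (Fin n) (Fin n) ℂ)
    (hR : R.PosDef) (c e P : ℝ) (hc : 0 < c) (he : 0 < e) (hP : 0 < P) :
    ∃ P' : Matrix (Fin n) (Fin n) ℂ, P'.PosSemidef ∧
      (1 / n : ℝ) * (Matrix.trace P').re ≤ P ∧
      R * P' = P' * R ∧
      (∀ Q : Matrix (Fin n) (Fin n) ℂ, Q.PosSemidef →
        (1 / n : ℝ) * (Matrix.trace Q).re ≤ P →
        Real.log ((Matrix.det (1 + ((c * e : ℝ) : ℂ) • (R * Q))).re)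
          ≤ Real.log ((Matrix.det (1 + ((c * e : ℝ) : ℂ) • (R * P'))).re)) ∧
      ∃ μ : ℝ, ∃ p : Fin n → ℝ,
        (∀ i, p i = max (μ - 1 / (c * e * hR.1.eigenvalues i)) 0) ∧
        (1 / n : ℝ) * ∑ i, p i = P ∧
        P' = (hR.1.eigenvectorUnitary : Matrix (Fin n) (Fin n) ℂ) *
            Matrix.diagonal (fun i => (p i : ℂ)) *
            star (hR.1.eigenvectorUnitary : Matrix (Fin n) (Fin n) ℂ) := by
  have : Nonempty (Fin n) := ⟨⟨0, hn⟩⟩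
  have hn' : (0 : ℝ) < n := Nat.cast_pos.mpr hn
  have hce : 0 < c * e := mul_pos hc he
  obtain ⟨μ, hμ, hsum⟩ := exists_waterLevel
    (fun i => one_div_pos.mpr (mul_pos hce (hR.eigenvalues_pos i))) (mul_pos hn' hP)
  set p : Fin n → ℝ := fun i => max (μ - 1 / (c * e * hR.1.eigenvalues i)) 0
  set U : Matrix (Fin n) (Fin n) ℂ := (hR.1.eigenvectorUnitary : Matrix (Fin n) (Fin n) ℂ)
  have hpower : (1 / n : ℝ) * ∑ i, p i = P := by rw [hsum]; field_simp
  have hpower_iff : ∀ X : Matrix (Fin n) (Fin n) ℂ,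
      (1 / n : ℝ) * X.trace.re ≤ P ↔ X.trace.re ≤ ∑ i, p i := fun X => by
    rw [hsum, one_div, inv_mul_le_iff₀ hn']
  have htrace : (U * diagonal (fun i => (p i : ℂ)) * star U).trace.re = ∑ i, p i := by
    rw [trace_mul_cycle, show star U * U = 1 from Unitary.coe_star_mul_self _, one_mul,
      trace_diagonal, ← Complex.ofReal_sum, Complex.ofReal_re]
  refine ⟨U * diagonal (fun i => (p i : ℂ)) * star U, ?_, (hpower_iff _).mpr htrace.le,
    (hR.1.commute_conj_diagonal _).eq, fun Q hQ hQP => ?_, μ, p, fun _ => rfl, hpower, rfl⟩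
  · have hp : (diagonal fun i => (p i : ℂ)).PosSemidef :=
      posSemidef_diagonal_iff.mpr fun i => by exact_mod_cast le_max_right _ _
    simpa only [star_eq_conjTranspose] using hp.mul_mul_conjTranspose_same U
  · simp only [Complex.coe_smul]
    exact hR.log_re_det_one_add_smul_mul_le_waterfilling hQ hce hμ (fun _ => rfl)
      ((hpower_iff Q).mp hQP)
end
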